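/- For every θ ∈ (0,∞)^m, every i ∈ {1,…,m}, every positive integer N, and every ε > 0, there exists a temperature τ̃ > 0 such that the mean squared error of the N-sample Smoothed-Autodiff estimator with temperature τ̃, namely (E_Z[∂_{θ_i} G(h_{τ̃}(Z,θ))] − D_i(θ))² + (1/N)·Var_Z(∂_{θ_i} G(h_{τ̃}(Z,θ))), is at most D_i(θ)² + ε; in particular the mean squared error of the Smoothed-Autodiff estimator remains bounded even in regimes where the REINFORCE mean squared error is unbounded. -/

import Mathlib

open Real Finset Filter MeasureTheory

/-- The Gumbel(0,1) measure on ℝ, with Lebesgue density `exp(−x − exp(−x))`. -/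
noncomputable def gumbel : Measure ℝ :=
  volume.withDensity fun x => ENNReal.ofReal (Real.exp (-x - Real.exp (-x)))

/-- The law of `Z = (Z_1,…,Z_m)` with i.i.d. Gumbel(0,1) coordinates. -/
noncomputable def gumbelPi (m : ℕ) : Measure (Fin m → ℝ) :=
  Measure.pi fun _ => gumbel

/-- Softmax weight `w_i^τ(z,θ) = exp((log θ_i + z_i)/τ) / ∑_j exp((log θ_j + z_j)/τ)`. -/
noncomputable def softW {m : ℕ} (τ : ℝ) (θ z : Fin m → ℝ) (i : Fin m) : ℝ :=
  Real.exp ((Real.log (θ i) + z i) / τ) / ∑ j, Real.exp ((Real.log (θ j) + z j) / τ)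

/-- Smoothed action `h_τ(z,θ) = ∑_i a_i · w_i^τ(z,θ)`. -/
noncomputable def hTau {m : ℕ} (τ : ℝ) (a θ z : Fin m → ℝ) : ℝ :=
  ∑ i, a i * softW τ θ z i

/-- Single-sample Smoothed-Autodiff gradient `∂_{θ_i} G(h_τ(z,θ))`. -/
noncomputable def saGrad {m : ℕ} (τ : ℝ) (a : Fin m → ℝ) (G : ℝ → ℝ)
    (θ : Fin m → ℝ) (i : Fin m) (z : Fin m → ℝ) : ℝ :=
  deriv (fun t : ℝ => G (hTau τ a (Function.update θ i t) z)) (θ i)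

/-- `Var_Z(∂_{θ_i} G(h_τ(Z,θ)))` for `Z` with i.i.d. Gumbel(0,1) coordinates. -/
noncomputable def saVar {m : ℕ} (τ : ℝ) (a : Fin m → ℝ) (G : ℝ → ℝ)
    (θ : Fin m → ℝ) (i : Fin m) : ℝ :=
  (∫ z, (saGrad τ a G θ i z) ^ 2 ∂(gumbelPi m)) -
    (∫ z, saGrad τ a G θ i z ∂(gumbelPi m)) ^ 2

/-! As `τ → ∞` the Smoothed-Autodiff gradient vanishes uniformly in `z`. By the chain rule it is
`G'(h_τ) · ∂_{θ_i} h_τ`; since `h_τ` is a convex combination of the actions, `|G'(h_τ)| ≤ Ḡ`, and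
`∂_{θ_i} h_τ = w_i^τ (a_i - h_τ) / (τ θ_i)` is at most `diam {a_j} / (τ θ_i)` in absolute value.
An estimator bounded by `c` has mean squared error at most `D² + 2c(|D| + c)` against any target
`D`, and this tends to `D²` as `c → 0`. -/

open Function Topology

lemma hasDerivAt_exp_neg_exp_neg (x : ℝ) :
    HasDerivAt (fun x => exp (-exp (-x))) (exp (-x - exp (-x))) x := by
  have h : HasDerivAt (fun x => -exp (-x)) (exp (-x)) x := by
    simpa using (hasDerivAt_neg x).exp.fun_neg
  convert h.exp using 1
  rw [sub_eq_add_neg, exp_add, mul_comm]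

lemma range_exp_neg_exp_neg : Set.range (fun x : ℝ => exp (-exp (-x))) = Set.Ioo 0 1 := by
  ext y
  constructor
  · rintro ⟨x, rfl⟩
    exact ⟨exp_pos _, exp_lt_one_iff.2 (neg_neg_of_pos (exp_pos _))⟩
  · rintro ⟨hy0, hy1⟩
    refine ⟨-log (-log y), ?_⟩
    dsimp only
    rw [neg_neg, exp_log (neg_pos.2 (log_neg hy0 hy1)), neg_neg, exp_log hy0]

-- `exp (-exp (-x))` is the Gumbel distribution function; it maps `ℝ` monotonically onto `(0, 1)`.
instance : IsProbabilityMeasure gumbel := by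
  have hmono : Monotone fun x : ℝ => exp (-exp (-x)) := fun x y h =>
    exp_le_exp.2 (neg_le_neg (exp_le_exp.2 (neg_le_neg h)))
  constructor
  rw [gumbel, withDensity_apply _ MeasurableSet.univ,
    lintegral_deriv_eq_volume_image_of_monotoneOn MeasurableSet.univ
      (fun x _ => (hasDerivAt_exp_neg_exp_neg x).hasDerivWithinAt) (hmono.monotoneOn _),
    Set.image_univ, range_exp_neg_exp_neg, Real.volume_Ioo]
  simp

instance (m : ℕ) : IsProbabilityMeasure (gumbelPi m) := by
  unfold gumbelPi
  infer_instance

lemma sq_integral_sub_add_mul_variance_le {Ω : Type*} [MeasurableSpace Ω] (μ : Measure Ω)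
    [IsProbabilityMeasure μ] {f : Ω → ℝ} {c : ℝ} (hf : ∀ᵐ x ∂μ, |f x| ≤ c) (D : ℝ) {κ : ℝ}
    (hκ₀ : 0 ≤ κ) (hκ₁ : κ ≤ 1) :
    ((∫ x, f x ∂μ) - D) ^ 2 + κ * ((∫ x, f x ^ 2 ∂μ) - (∫ x, f x ∂μ) ^ 2)
      ≤ D ^ 2 + 2 * c * (|D| + c) := by
  have hmean : |∫ x, f x ∂μ| ≤ c := by
    simpa using norm_integral_le_of_norm_le_const (μ := μ) (f := f) (C := c) (by simpa using hf)
  have hsq : ∫ x, f x ^ 2 ∂μ ≤ c ^ 2 := by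
    have h := norm_integral_le_of_norm_le_const (μ := μ) (f := fun x => f x ^ 2) (C := c ^ 2)
      (hf.mono fun x hx => by simpa using pow_le_pow_left₀ (abs_nonneg _) hx 2)
    simpa using (le_abs_self _).trans h
  have hsq₀ : 0 ≤ ∫ x, f x ^ 2 ∂μ := integral_nonneg fun x => sq_nonneg _
  have hbias : ((∫ x, f x ∂μ) - D) ^ 2 ≤ (|D| + c) ^ 2 := by
    rw [← sq_abs]
    exact pow_le_pow_left₀ (abs_nonneg _) ((abs_sub _ _).trans (by linarith)) 2
  have hvar : κ * ((∫ x, f x ^ 2 ∂μ) - (∫ x, f x ∂μ) ^ 2) ≤ c ^ 2 := by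
    nlinarith [mul_nonneg hκ₀ (sq_nonneg (∫ x, f x ∂μ)), mul_le_mul_of_nonneg_right hκ₁ hsq₀]
  linarith [sq_abs D]

section CenterMass

variable {ι : Type*} [Fintype ι]

lemma dist_centerMass_le_diam {E : Type*} [NormedAddCommGroup E] [NormedSpace ℝ E]
    {w : ι → ℝ} (hw₀ : ∀ j, 0 ≤ w j) (hw : 0 < ∑ j, w j) (a : ι → E) (i : ι) :
    dist (a i) (univ.centerMass w a) ≤ Metric.diam (Set.range a) := by
  rw [← convexHull_diam]
  exact Metric.dist_le_diam_of_mem (isBounded_convexHull.2 (Set.finite_range a).isBounded)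
    (subset_convexHull ℝ _ (Set.mem_range_self i))
    (univ.centerMass_mem_convexHull (fun j _ => hw₀ j) hw fun j _ => Set.mem_range_self j)

lemma hasDerivAt_centerMass_update [DecidableEq ι] (w a : ι → ℝ) (i : ι) (hw : ∑ j, w j ≠ 0) :
    HasDerivAt (fun s => univ.centerMass (update w i s) a)
      ((a i - univ.centerMass w a) / ∑ j, w j) (w i) := by
  have hcoord (j : ι) : HasDerivAt (fun s => update w i s j) ((Pi.single i 1 : ι → ℝ) j) (w i) :=
    hasDerivAt_pi.1 (hasDerivAt_update w i (w i)) j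
  have hden : HasDerivAt (fun s => ∑ j, update w i s j) 1 (w i) := by
    simpa using HasDerivAt.fun_sum (u := univ) fun j _ => hcoord j
  have hnum : HasDerivAt (fun s => ∑ j, update w i s j * a j) (a i) (w i) := by
    simpa [Pi.single_apply] using
      HasDerivAt.fun_sum (u := univ) fun j _ => (hcoord j).mul_const (a j)
  have hcm : (fun s => univ.centerMass (update w i s) a)
      = fun s => (∑ j, update w i s j * a j) / ∑ j, update w i s j := by
    ext s
    rw [Finset.centerMass, smul_eq_mul, div_eq_inv_mul]
    simp only [smul_eq_mul, mul_comm]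
  rw [hcm]
  refine (hnum.fun_div hden (by simpa using hw)).congr_deriv ?_
  simp only [Finset.centerMass, smul_eq_mul, update_eq_self]
  field_simp

end CenterMass

section Softmax

variable {m : ℕ} (τ : ℝ) (θ z : Fin m → ℝ)

noncomputable def softScore (j : Fin m) : ℝ :=
  exp ((log (θ j) + z j) / τ)

lemma hTau_eq_centerMass (a : Fin m → ℝ) :
    hTau τ a θ z = univ.centerMass (softScore τ θ z) a := by
  simp only [hTau, softW, Finset.centerMass, smul_eq_mul, mul_sum, softScore]
  refine sum_congr rfl fun j _ => ?_
  ring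

lemma softScore_update (i : Fin m) (t : ℝ) :
    softScore τ (update θ i t) z = update (softScore τ θ z) i (exp ((log t + z i) / τ)) := by
  ext j
  rcases eq_or_ne j i with rfl | hj
  · simp [softScore]
  · simp [softScore, hj]

lemma softScore_pos (j : Fin m) : 0 < softScore τ θ z j :=
  exp_pos _

lemma sum_softScore_pos (i : Fin m) : 0 < ∑ j, softScore τ θ z j :=
  sum_pos (fun j _ => softScore_pos τ θ z j) ⟨i, mem_univ i⟩

lemma hasDerivAt_hTau_update (a : Fin m → ℝ) {i : Fin m} (hθ : 0 < θ i) :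
    HasDerivAt (fun t => hTau τ a (update θ i t) z)
      (softScore τ θ z i / (τ * θ i) * ((a i - hTau τ a θ z) / ∑ j, softScore τ θ z j))
      (θ i) := by
  have hscore : HasDerivAt (fun t => exp ((log t + z i) / τ))
      (softScore τ θ z i / (τ * θ i)) (θ i) := by
    convert (((hasDerivAt_log hθ.ne').add_const (z i)).div_const τ).exp using 1
    rw [softScore]
    field_simp
  have hcm := hasDerivAt_centerMass_update (softScore τ θ z) a i
    (sum_softScore_pos τ θ z i).ne'
  simp only [hTau_eq_centerMass, softScore_update]
  rw [mul_comm]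
  exact hcm.comp (θ i) hscore

lemma abs_saGrad_le {a : Fin m → ℝ} {G : ℝ → ℝ} {Gbar : ℝ} {i : Fin m} (hτ : 0 < τ)
    (hG : Differentiable ℝ G) (hG' : ∀ x ∈ convexHull ℝ (Set.range a), |deriv G x| ≤ Gbar)
    (hθ : 0 < θ i) :
    |saGrad τ a G θ i z| ≤ Gbar * Metric.diam (Set.range a) / (τ * θ i) := by
  set S := ∑ j, softScore τ θ z j
  have hS : 0 < S := sum_softScore_pos τ θ z i
  have hmem : hTau τ a θ z ∈ convexHull ℝ (Set.range a) := by
    rw [hTau_eq_centerMass]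
    exact univ.centerMass_mem_convexHull (fun j _ => (softScore_pos τ θ z j).le) hS
      fun j _ => Set.mem_range_self j
  have hGbar : 0 ≤ Gbar := (abs_nonneg _).trans (hG' _ hmem)
  have hG₁ : HasDerivAt G (deriv G (hTau τ a θ z)) (hTau τ a (update θ i (θ i)) z) := by
    rw [update_eq_self]
    exact (hG _).hasDerivAt
  have hweight : softScore τ θ z i / S ≤ 1 := by
    refine div_le_one_of_le₀ ?_ hS.le
    exact single_le_sum (f := softScore τ θ z) (fun j _ => (softScore_pos τ θ z j).le) (mem_univ i)
  have hspread : |a i - hTau τ a θ z| ≤ Metric.diam (Set.range a) := by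
    rw [hTau_eq_centerMass, ← Real.dist_eq]
    exact dist_centerMass_le_diam (fun j => (softScore_pos τ θ z j).le) hS a i
  have hchain := hG₁.comp (θ i) (hasDerivAt_hTau_update τ θ z a hθ)
  rw [saGrad, ← comp_def, hchain.deriv, abs_mul]
  calc |deriv G (hTau τ a θ z)| * |softScore τ θ z i / (τ * θ i) * ((a i - hTau τ a θ z) / S)|
      = |deriv G (hTau τ a θ z)| *
          (softScore τ θ z i / S * |a i - hTau τ a θ z| / (τ * θ i)) := by
        rw [abs_mul, abs_div, abs_div, abs_of_pos (softScore_pos τ θ z i),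
          abs_of_pos (mul_pos hτ hθ), abs_of_pos hS]
        ring
    _ ≤ Gbar * (1 * Metric.diam (Set.range a) / (τ * θ i)) := by
        have hw : 0 ≤ softScore τ θ z i / S := (div_pos (softScore_pos τ θ z i) hS).le
        gcongr
        exact hG' _ hmem
    _ = Gbar * Metric.diam (Set.range a) / (τ * θ i) := by ring

end Softmax

theorem smoothed_autodiff_mse_bounded_general {m : ℕ} (a : Fin m → ℝ)
    (G : ℝ → ℝ) (hG : Differentiable ℝ G) (Gbar : ℝ)
    (hG' : ∀ x ∈ convexHull ℝ (Set.range a), |deriv G x| ≤ Gbar)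
    (θ : Fin m → ℝ) (hθ : ∀ j, 0 < θ j) (i : Fin m) (N : ℕ)
    (ε : ℝ) (hε : 0 < ε) (Di : ℝ) :
    ∃ τ : ℝ, 0 < τ ∧
      ((∫ z, saGrad τ a G θ i z ∂(gumbelPi m)) - Di) ^ 2
        + (1 / (N : ℝ)) * saVar τ a G θ i ≤ Di ^ 2 + ε := by
  set K := Gbar * Metric.diam (Set.range a) / θ i
  have hK : Tendsto (fun τ : ℝ => K / τ) atTop (𝓝 0) := tendsto_const_nhds.div_atTop tendsto_id
  have hlim : Tendsto (fun τ : ℝ => Di ^ 2 + 2 * (K / τ) * (|Di| + K / τ)) atTop (𝓝 (Di ^ 2)) := by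
    simpa using tendsto_const_nhds.add ((hK.const_mul 2).mul (tendsto_const_nhds.add hK))
  obtain ⟨τ, hτ, hτε⟩ := ((eventually_gt_atTop 0).and
    (hlim.eventually (gt_mem_nhds (lt_add_of_pos_right _ hε)))).exists
  refine ⟨τ, hτ, le_trans ?_ hτε.le⟩
  have hbound : ∀ z, |saGrad τ a G θ i z| ≤ K / τ := fun z => by
    simpa [K, div_div, mul_comm τ] using abs_saGrad_le τ θ z hτ hG hG' (hθ i)
  exact sq_integral_sub_add_mul_variance_le _ (ae_of_all _ hbound) Di (by positivity)
    (by simpa using Nat.cast_inv_le_one N)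

/-- For every `θ ∈ (0,∞)^m`, coordinate `i`, positive `N`, and `ε > 0`, there is a
temperature `τ̃ > 0` such that the MSE of the `N`-sample Smoothed-Autodiff estimator with
temperature `τ̃` is at most `D_i(θ)² + ε`, where `D_i(θ) = ∂_{θ_i} E_θ[G]`; in particular
it remains bounded even where the REINFORCE MSE is unbounded. -/
theorem smoothed_autodiff_mse_bounded {m : ℕ} (hm : 2 ≤ m) (a : Fin m → ℝ)
    (G : ℝ → ℝ) (hG : Differentiable ℝ G) (Gbar : ℝ)
    (hG' : ∀ x ∈ convexHull ℝ (Set.range a), |deriv G x| ≤ Gbar)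
    (θ : Fin m → ℝ) (hθ : ∀ j, 0 < θ j) (i : Fin m) (N : ℕ) (hN : 0 < N)
    (ε : ℝ) (hε : 0 < ε) (Di : ℝ)
    (hD : HasDerivAt
      (fun t : ℝ => ∑ j, Function.update θ i t j * G (a j) / ∑ k, Function.update θ i t k)
      Di (θ i)) :
    ∃ τ : ℝ, 0 < τ ∧
      ((∫ z, saGrad τ a G θ i z ∂(gumbelPi m)) - Di) ^ 2
        + (1 / (N : ℝ)) * saVar τ a G θ i ≤ Di ^ 2 + ε :=
  smoothed_autodiff_mse_bounded_general a G hG Gbar hG' θ hθ i N ε hε Di
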